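/- arXiv:1007.3564 — 4 statements merged into one kernel-verified Lean document; each statement's English description precedes it below -/
import Mathlib

section
/- Let A ∈ ℝ^{p×p} have positive definite symmetric part S = (A + Aᵀ)/2, let B ∈ ℝ^p, C ∈ ℝ, t ∈ ℝ, let M ∈ ℝ^{p×p} be invertible with MᵀM = S, and set Y = −(1/2)(Mᵀ)⁻¹B. Then a vector β ∈ ℝ^p minimizes the function β ↦ βᵀAβ + βᵀB + C + t‖β‖₁ over ℝ^p if and only if β minimizes the lasso-penalized least-squares function β ↦ ‖Y − Mβ‖₂² + t‖β‖₁ over ℝ^p. (Corollary of Theorem 1: the general lasso-regularized quadratic problem is equivalent to a lasso-regularized least-squares problem.) -/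
open Matrix BigOperators

/-- Corollary of Theorem 1 of the MEN paper: with `MᵀM = (A + Aᵀ)/2` positive
definite and `Y = −(1/2)(Mᵀ)⁻¹B`, a vector `β` minimizes the lasso-regularized
quadratic `βᵀAβ + βᵀB + C + t‖β‖₁` if and only if it minimizes the
lasso-penalized least squares `‖Y − Mβ‖₂² + t‖β‖₁`. -/
theorem men_lasso_quadratic_equiv_least_squares {p : ℕ}
    (A M : Matrix (Fin p) (Fin p) ℝ) (B Y : Fin p → ℝ) (C t : ℝ)
    (hPD : ∀ β : Fin p → ℝ, β ≠ 0 → 0 < β ⬝ᵥ ((((1 : ℝ) / 2) • (A + Aᵀ)) *ᵥ β))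
    (hM : IsUnit M.det)
    (hMM : Mᵀ * M = ((1 : ℝ) / 2) • (A + Aᵀ))
    (hY : Y = (-(1 / 2 : ℝ)) • ((Mᵀ)⁻¹ *ᵥ B))
    (β : Fin p → ℝ) :
    (∀ β' : Fin p → ℝ,
        β ⬝ᵥ (A *ᵥ β) + β ⬝ᵥ B + C + t * ∑ i, |β i| ≤
          β' ⬝ᵥ (A *ᵥ β') + β' ⬝ᵥ B + C + t * ∑ i, |β' i|) ↔
    (∀ β' : Fin p → ℝ,
        (∑ i, (Y i - (M *ᵥ β) i) ^ 2) + t * ∑ i, |β i| ≤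
          (∑ i, (Y i - (M *ᵥ β') i) ^ 2) + t * ∑ i, |β' i|) := by
  have hMT : IsUnit (Mᵀ).det := by rwa [Matrix.det_transpose]
  have hMTY : Mᵀ *ᵥ Y = (-(1 / 2 : ℝ)) • B := by
    rw [hY, Matrix.mulVec_smul, Matrix.mulVec_mulVec,
      Matrix.mul_nonsing_inv _ hMT, Matrix.one_mulVec]
  have key : ∀ b : Fin p → ℝ,
      (∑ i, (Y i - (M *ᵥ b) i) ^ 2)
        = b ⬝ᵥ (A *ᵥ b) + b ⬝ᵥ B + ∑ i, Y i ^ 2 := by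
    intro b
    have h1 : (M *ᵥ b) ⬝ᵥ (M *ᵥ b) = b ⬝ᵥ (A *ᵥ b) := by
      have : (M *ᵥ b) ⬝ᵥ (M *ᵥ b) = b ⬝ᵥ ((Mᵀ * M) *ᵥ b) := by
        rw [← Matrix.mulVec_mulVec, Matrix.dotProduct_mulVec,
          ← Matrix.mulVec_transpose, dotProduct_comm]
      rw [this, hMM]
      have hsym : b ⬝ᵥ (Aᵀ *ᵥ b) = b ⬝ᵥ (A *ᵥ b) := by
        rw [Matrix.dotProduct_mulVec, Matrix.vecMul_transpose,
          dotProduct_comm]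
      rw [Matrix.smul_mulVec, Matrix.add_mulVec, dotProduct_smul,
        dotProduct_add, hsym, smul_eq_mul]
      ring
    have h2 : Y ⬝ᵥ (M *ᵥ b) = (-(1 / 2 : ℝ)) * (b ⬝ᵥ B) := by
      rw [Matrix.dotProduct_mulVec, ← Matrix.mulVec_transpose, hMTY]
      simp [dotProduct_comm, dotProduct_smul, smul_eq_mul]
    have expand : (∑ i, (Y i - (M *ᵥ b) i) ^ 2)
        = (∑ i, Y i ^ 2) - 2 * (Y ⬝ᵥ (M *ᵥ b)) + (M *ᵥ b) ⬝ᵥ (M *ᵥ b) := by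
      simp only [dotProduct, Finset.mul_sum, ← Finset.sum_sub_distrib,
        ← Finset.sum_add_distrib]
      apply Finset.sum_congr rfl
      intro i _
      ring
    rw [expand, h1, h2]
    ring
  constructor
  · intro h b'
    have := h b'
    rw [key β, key b']
    linarith
  · intro h b'
    have := h b'
    rw [key β, key b'] at this
    linarith
end

section
/- Let L ∈ ℝ^{n×n} be symmetric positive semidefinite, α ≥ 0, β > 0, X ∈ ℝ^{n×p}, Y ∈ ℝ^n and w ∈ ℝ^p. Set P = β(αL + βI)⁻¹, z = P X w, and A = α Pᵀ L P + β (P − I)ᵀ (P − I) + I. Then ‖Y − Xw‖₂² + α zᵀ L z + β ‖z − Xw‖₂² = wᵀ Xᵀ A X w − 2 wᵀ Xᵀ Y + ‖Y‖₂². (Identity obtained when the low-dimensional representation Z is eliminated from the MEN objective by substituting its optimal value.) -/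
open Matrix BigOperators

/-- Identity obtained when the low-dimensional representation is eliminated from
the MEN objective by substituting its optimal value: with `P = b(aL + bI)⁻¹`,
`z = PXw` and `A = a PᵀLP + b (P−I)ᵀ(P−I) + I`, one has
`‖Y − Xw‖₂² + a zᵀLz + b ‖z − Xw‖₂² = wᵀXᵀAXw − 2wᵀXᵀY + ‖Y‖₂²`. -/
theorem men_eliminate_Z_identity {n p : ℕ}
    (L : Matrix (Fin n) (Fin n) ℝ) (a b : ℝ)
    (X : Matrix (Fin n) (Fin p) ℝ) (Y : Fin n → ℝ) (w : Fin p → ℝ)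
    (P A : Matrix (Fin n) (Fin n) ℝ) (z : Fin n → ℝ)
    (hsymm : Lᵀ = L)
    (hpsd : ∀ v : Fin n → ℝ, 0 ≤ v ⬝ᵥ (L *ᵥ v))
    (ha : 0 ≤ a) (hb : 0 < b)
    (hP : P = b • (a • L + b • (1 : Matrix (Fin n) (Fin n) ℝ))⁻¹)
    (hz : z = P *ᵥ (X *ᵥ w))
    (hA : A = a • (Pᵀ * L * P) +
              b • ((P - 1)ᵀ * (P - 1)) + 1) :
    (∑ i, (Y i - (X *ᵥ w) i) ^ 2) + a * (z ⬝ᵥ (L *ᵥ z)) +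
        b * ∑ i, (z i - (X *ᵥ w) i) ^ 2 =
      w ⬝ᵥ ((Xᵀ * A * X) *ᵥ w) - 2 * (w ⬝ᵥ (Xᵀ *ᵥ Y)) + ∑ i, (Y i) ^ 2 := by
  subst hz hA
  set u := X *ᵥ w with hu
  have hsq : ∀ (f : Fin n → ℝ), ∑ i, (f i)^2 = f ⬝ᵥ f := by
    intro f; simp [dotProduct, sq]
  have h1 : ∑ i, (Y i - u i)^2 = (Y - u) ⬝ᵥ (Y - u) := by
    rw [← hsq]; rfl
  have h2 : ∑ i, ((P *ᵥ u) i - u i)^2 = (P *ᵥ u - u) ⬝ᵥ (P *ᵥ u - u) := by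
    rw [← hsq]; rfl
  have h3 : ∑ i, (Y i)^2 = Y ⬝ᵥ Y := hsq Y
  rw [h1, h2, h3]
  have key : ∀ (M : Matrix (Fin n) (Fin n) ℝ),
      w ⬝ᵥ ((Xᵀ * M * X) *ᵥ w) = u ⬝ᵥ (M *ᵥ u) := by
    intro M
    rw [← mulVec_mulVec, ← mulVec_mulVec, dotProduct_mulVec, vecMul_transpose]
  have hxy : w ⬝ᵥ (Xᵀ *ᵥ Y) = u ⬝ᵥ Y := by
    rw [dotProduct_mulVec, vecMul_transpose]
  simp only [Matrix.mul_add, Matrix.add_mul, Matrix.mul_smul, Matrix.smul_mul,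
    Matrix.one_mul, Matrix.mul_one, add_mulVec, smul_mulVec,
    dotProduct_add, dotProduct_smul, smul_eq_mul, key, hxy]
  have k1 : u ⬝ᵥ ((Pᵀ * L * P) *ᵥ u) = (P *ᵥ u) ⬝ᵥ (L *ᵥ (P *ᵥ u)) := by
    rw [← mulVec_mulVec, ← mulVec_mulVec, dotProduct_mulVec, vecMul_transpose]
  have k2 : u ⬝ᵥ (((P - 1)ᵀ * (P - 1)) *ᵥ u) = (P *ᵥ u - u) ⬝ᵥ (P *ᵥ u - u) := by
    rw [← mulVec_mulVec, dotProduct_mulVec, vecMul_transpose, sub_mulVec, one_mulVec]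
  rw [k1, k2]
  simp only [sub_dotProduct, dotProduct_sub, one_mulVec]
  have hc : u ⬝ᵥ Y = Y ⬝ᵥ u := dotProduct_comm _ _
  have kuu : w ⬝ᵥ ((Xᵀ * X) *ᵥ w) = u ⬝ᵥ u := by
    rw [← mulVec_mulVec, dotProduct_mulVec, vecMul_transpose]
  rw [kuu, dotProduct_comm Y u]
  ring
end

section
/- Let X ∈ ℝ^{n×p}, Y ∈ ℝ^n, λ₁ ≥ 0 and λ₂ ≥ 0. Define the augmented data matrix X* = (1+λ₂)^{-1/2} · [X; √λ₂ · I_p] ∈ ℝ^{(n+p)×p} (X stacked on top of √λ₂ times the p×p identity) and the augmented response Y* = [Y; 0] ∈ ℝ^{n+p} (Y stacked on top of the zero vector in ℝ^p). Then for every w ∈ ℝ^p, setting w* = √(1+λ₂) · w and λ = λ₁/√(1+λ₂), one has ‖Y* − X*w*‖₂² + λ‖w*‖₁ = ‖Y − Xw‖₂² + λ₂‖w‖₂² + λ₁‖w‖₁. Consequently, w minimizes the elastic-net objective ‖Y − Xw‖₂² + λ₂‖w‖₂² + λ₁‖w‖₁ over ℝ^p if and only if w* = √(1+λ₂)·w minimizes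 the lasso objective β ↦ ‖Y* − X*β‖₂² + λ‖β‖₁ over ℝ^p. -/
open Matrix BigOperators

/-- The augmented data matrix `X* = (1+λ₂)^{-1/2} [X; √λ₂ I_p]` of the
elastic-net-to-lasso reduction: `X` stacked on top of `√λ₂` times the `p × p`
identity, scaled by `(1+λ₂)^{-1/2}`. -/
noncomputable def augmentedData {n p : ℕ} (X : Matrix (Fin n) (Fin p) ℝ) (l2 : ℝ) :
    Matrix (Fin n ⊕ Fin p) (Fin p) ℝ :=
  Matrix.of fun i j =>
    (Real.sqrt (1 + l2))⁻¹ *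
      Sum.elim (fun r => X r j)
        (fun r => Real.sqrt l2 * (if r = j then 1 else 0)) i

/-- The augmented response `Y* = [Y; 0]`: `Y` stacked on top of the zero
vector in `ℝ^p`. -/
def augmentedResponse {n p : ℕ} (Y : Fin n → ℝ) : Fin n ⊕ Fin p → ℝ :=
  Sum.elim Y (0 : Fin p → ℝ)

/-!
Rescaling by `s = √(1+λ₂)` cancels the factor `s⁻¹` in `X*`, so `X* (s w) = [X w; √λ₂ w]`.
The second block contributes `‖√λ₂ w‖₂² = λ₂ ‖w‖₂²` to the residual, and
`(λ₁ / s) ‖s w‖₁ = λ₁ ‖w‖₁`. Since `w ↦ s w` is a bijection of `ℝ^p`, minimizers correspond.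
-/

lemma forall_le_iff_forall_smul_le {ι : Type*} {f g : (ι → ℝ) → ℝ} {c : ℝ} (hc : c ≠ 0)
    (hfg : ∀ w, f (c • w) = g w) (w : ι → ℝ) :
    (∀ w', g w ≤ g w') ↔ ∀ β, f (c • w) ≤ f β := by
  refine ⟨fun h β => ?_, fun h w' => ?_⟩
  · rw [hfg, ← smul_inv_smul₀ hc β, hfg]
    exact h _
  · simpa only [hfg] using h (c • w')

section Objectives

variable {m ι : Type*} [Fintype m] [Fintype ι]

def lassoObjective (A : Matrix m ι ℝ) (b : m → ℝ) (lam : ℝ) (β : ι → ℝ) : ℝ :=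
  ∑ i, (b i - (A *ᵥ β) i) ^ 2 + lam * ∑ j, |β j|

def elasticNetObjective (X : Matrix m ι ℝ) (Y : m → ℝ) (l1 l2 : ℝ) (w : ι → ℝ) : ℝ :=
  ∑ i, (Y i - (X *ᵥ w) i) ^ 2 + l2 * ∑ j, w j ^ 2 + l1 * ∑ j, |w j|

lemma div_mul_sum_abs_smul {l c : ℝ} (hc : 0 < c) (w : ι → ℝ) :
    l / c * ∑ j, |(c • w) j| = l * ∑ j, |w j| := by
  simp only [Pi.smul_apply, smul_eq_mul, abs_mul, abs_of_pos hc, ← Finset.mul_sum]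
  field_simp

end Objectives

section Augmented

variable {n p : ℕ}

lemma augmentedData_mulVec_smul (X : Matrix (Fin n) (Fin p) ℝ) {l2 : ℝ} (hl2 : 0 < 1 + l2)
    (w : Fin p → ℝ) :
    augmentedData X l2 *ᵥ (Real.sqrt (1 + l2) • w) = Sum.elim (X *ᵥ w) (Real.sqrt l2 • w) := by
  have hs : Real.sqrt (1 + l2) ≠ 0 := (Real.sqrt_pos.2 hl2).ne'
  ext (i | r)
  · simp only [augmentedData, mulVec, dotProduct, of_apply, Sum.elim_inl, Pi.smul_apply,
      smul_eq_mul]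
    exact Finset.sum_congr rfl fun j _ => by field_simp
  · simp only [augmentedData, mulVec, dotProduct, of_apply, Sum.elim_inr, Pi.smul_apply,
      smul_eq_mul, mul_ite, mul_one, mul_zero, ite_mul, zero_mul, Finset.sum_ite_eq,
      Finset.mem_univ, if_true]
    field_simp

lemma sum_sq_augmentedResponse_sub (Y : Fin n → ℝ) (u : Fin n → ℝ) {l2 : ℝ} (hl2 : 0 ≤ l2)
    (w : Fin p → ℝ) :
    ∑ i, (augmentedResponse Y i - Sum.elim u (Real.sqrt l2 • w) i) ^ 2 =
      ∑ i, (Y i - u i) ^ 2 + l2 * ∑ j, w j ^ 2 := by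
  simp only [augmentedResponse, Fintype.sum_sum_type, Sum.elim_inl, Sum.elim_inr,
    Pi.zero_apply, Pi.smul_apply, smul_eq_mul, zero_sub, neg_sq, mul_pow,
    Real.sq_sqrt hl2, ← Finset.mul_sum]

theorem lassoObjective_augmented_smul (X : Matrix (Fin n) (Fin p) ℝ) (Y : Fin n → ℝ)
    (l1 : ℝ) {l2 : ℝ} (hl2 : 0 ≤ l2) (w : Fin p → ℝ) :
    lassoObjective (augmentedData X l2) (augmentedResponse Y) (l1 / Real.sqrt (1 + l2))
        (Real.sqrt (1 + l2) • w) =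
      elasticNetObjective X Y l1 l2 w := by
  have hl2' : 0 < 1 + l2 := by linarith
  rw [lassoObjective, augmentedData_mulVec_smul X hl2', sum_sq_augmentedResponse_sub Y _ hl2,
    div_mul_sum_abs_smul (Real.sqrt_pos.2 hl2'), elasticNetObjective]

end Augmented

theorem elastic_net_is_lasso_on_augmented_data_general {n p : ℕ}
    (X : Matrix (Fin n) (Fin p) ℝ) (Y : Fin n → ℝ) (l1 l2 : ℝ)
    (hl2 : 0 ≤ l2) :
    ∀ w : Fin p → ℝ,
      ((∑ i, (augmentedResponse Y i -
            (augmentedData X l2 *ᵥ (Real.sqrt (1 + l2) • w)) i) ^ 2) +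
          (l1 / Real.sqrt (1 + l2)) * ∑ j, |(Real.sqrt (1 + l2) • w) j| =
        (∑ i, (Y i - (X *ᵥ w) i) ^ 2) + l2 * ∑ j, (w j) ^ 2 + l1 * ∑ j, |w j|) ∧
      ((∀ w' : Fin p → ℝ,
          (∑ i, (Y i - (X *ᵥ w) i) ^ 2) + l2 * ∑ j, (w j) ^ 2 + l1 * ∑ j, |w j| ≤
            (∑ i, (Y i - (X *ᵥ w') i) ^ 2) + l2 * ∑ j, (w' j) ^ 2 +
              l1 * ∑ j, |w' j|) ↔
        (∀ β : Fin p → ℝ,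
          (∑ i, (augmentedResponse Y i -
              (augmentedData X l2 *ᵥ (Real.sqrt (1 + l2) • w)) i) ^ 2) +
              (l1 / Real.sqrt (1 + l2)) * ∑ j, |(Real.sqrt (1 + l2) • w) j| ≤
            (∑ i, (augmentedResponse Y i - (augmentedData X l2 *ᵥ β) i) ^ 2) +
              (l1 / Real.sqrt (1 + l2)) * ∑ j, |β j|)) := by
  have hs : Real.sqrt (1 + l2) ≠ 0 := (Real.sqrt_pos.2 (by linarith)).ne'
  have key := lassoObjective_augmented_smul X Y l1 hl2
  exact fun w => ⟨key w, forall_le_iff_forall_smul_le hs key w⟩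

/-- The elastic net is a lasso on augmented data: for every `w`, with
`w* = √(1+λ₂) w` and `λ = λ₁/√(1+λ₂)`, one has
`‖Y* − X*w*‖₂² + λ‖w*‖₁ = ‖Y − Xw‖₂² + λ₂‖w‖₂² + λ₁‖w‖₁`; consequently `w`
minimizes the elastic-net objective iff `w*` minimizes the lasso objective
on the augmented data. -/
theorem elastic_net_is_lasso_on_augmented_data {n p : ℕ}
    (X : Matrix (Fin n) (Fin p) ℝ) (Y : Fin n → ℝ) (l1 l2 : ℝ)
    (hl1 : 0 ≤ l1) (hl2 : 0 ≤ l2) :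
    ∀ w : Fin p → ℝ,
      ((∑ i, (augmentedResponse Y i -
            (augmentedData X l2 *ᵥ (Real.sqrt (1 + l2) • w)) i) ^ 2) +
          (l1 / Real.sqrt (1 + l2)) * ∑ j, |(Real.sqrt (1 + l2) • w) j| =
        (∑ i, (Y i - (X *ᵥ w) i) ^ 2) + l2 * ∑ j, (w j) ^ 2 + l1 * ∑ j, |w j|) ∧
      ((∀ w' : Fin p → ℝ,
          (∑ i, (Y i - (X *ᵥ w) i) ^ 2) + l2 * ∑ j, (w j) ^ 2 + l1 * ∑ j, |w j| ≤
            (∑ i, (Y i - (X *ᵥ w') i) ^ 2) + l2 * ∑ j, (w' j) ^ 2 +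
              l1 * ∑ j, |w' j|) ↔
        (∀ β : Fin p → ℝ,
          (∑ i, (augmentedResponse Y i -
              (augmentedData X l2 *ᵥ (Real.sqrt (1 + l2) • w)) i) ^ 2) +
              (l1 / Real.sqrt (1 + l2)) * ∑ j, |(Real.sqrt (1 + l2) • w) j| ≤
            (∑ i, (augmentedResponse Y i - (augmentedData X l2 *ᵥ β) i) ^ 2) +
              (l1 / Real.sqrt (1 + l2)) * ∑ j, |β j|)) :=
  elastic_net_is_lasso_on_augmented_data_general X Y l1 l2 hl2
end

section
/- Let m ≥ 1 and let X_A ∈ ℝ^{n×m} have columns x₁, …, x_m and invertible Gram matrix G = X_Aᵀ X_A. Let 1 ∈ ℝ^m denote the all-ones vector. Then 1ᵀ G⁻¹ 1 > 0, and setting A_A = (1ᵀ G⁻¹ 1)^{-1/2}, ω_A = A_A · G⁻¹ 1 and u_A = X_A ω_A, the equiangular vector u_A satisfies ‖u_A‖₂ = 1 and xⱼᵀ u_A = A_A for every j = 1, …, m; i.e., u_A is a unit vector making equal inner products with all active variables. -/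
/-!
`G = XᵀX` is positive definite because `X` is injective, so `G⁻¹` is too and `1ᵀG⁻¹1 > 0`.
For `ω = c • G⁻¹1` with `c = (1ᵀG⁻¹1)^{-1/2}` one has `Xᵀ(Xω) = Gω = c • 1`, which gives the equal
inner products, and `‖Xω‖² = (Xᵀ(Xω)) ⬝ ω = c² · 1ᵀG⁻¹1 = 1`.
-/

open Matrix BigOperators

namespace Matrix

variable {ι κ : Type*} [Fintype ι] [Fintype κ] [DecidableEq κ]

theorem mulVec_injective_of_isUnit_det_mul {R : Type*} [CommRing R] {A : Matrix κ ι R}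
    {X : Matrix ι κ R} (h : IsUnit (A * X).det) : Function.Injective X.mulVec := by
  have hcomp : A.mulVec ∘ X.mulVec = (A * X).mulVec := funext fun v => mulVec_mulVec v A X
  refine Function.Injective.of_comp (f := A.mulVec) ?_
  rw [hcomp]
  exact mulVec_injective_of_isUnit ((isUnit_iff_isUnit_det _).2 h)

theorem posDef_transpose_mul_self_of_isUnit_det {X : Matrix ι κ ℝ} (h : IsUnit (Xᵀ * X).det) :
    (Xᵀ * X).PosDef :=
  PosDef.conjTranspose_mul_self X (mulVec_injective_of_isUnit_det_mul h)

/-- For `b = 1` this is `ω_A`, and `X *ᵥ equiangularWeights (Xᵀ * X) 1` is `u_A`. -/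
noncomputable def equiangularWeights (G : Matrix κ κ ℝ) (b : κ → ℝ) : κ → ℝ :=
  (√(b ⬝ᵥ (G⁻¹ *ᵥ b)))⁻¹ • (G⁻¹ *ᵥ b)

theorem transpose_mulVec_mulVec_equiangularWeights {X : Matrix ι κ ℝ} (h : IsUnit (Xᵀ * X).det)
    (b : κ → ℝ) :
    Xᵀ *ᵥ (X *ᵥ equiangularWeights (Xᵀ * X) b) = (√(b ⬝ᵥ ((Xᵀ * X)⁻¹ *ᵥ b)))⁻¹ • b := by
  rw [equiangularWeights, mulVec_mulVec, mulVec_smul, mulVec_mulVec, mul_nonsing_inv _ h,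
    one_mulVec]

theorem dotProduct_self_mulVec_equiangularWeights {X : Matrix ι κ ℝ} (h : IsUnit (Xᵀ * X).det)
    {b : κ → ℝ} (hb : 0 < b ⬝ᵥ ((Xᵀ * X)⁻¹ *ᵥ b)) :
    (X *ᵥ equiangularWeights (Xᵀ * X) b) ⬝ᵥ (X *ᵥ equiangularWeights (Xᵀ * X) b) = 1 := by
  have hgram : ∀ ω, (X *ᵥ ω) ⬝ᵥ (X *ᵥ ω) = (Xᵀ *ᵥ (X *ᵥ ω)) ⬝ᵥ ω := fun ω => by
    rw [dotProduct_mulVec, mulVec_transpose]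
  rw [hgram, transpose_mulVec_mulVec_equiangularWeights h, equiangularWeights, smul_dotProduct,
    dotProduct_smul, smul_eq_mul, smul_eq_mul, ← mul_assoc, ← mul_inv, Real.mul_self_sqrt hb.le,
    inv_mul_cancel₀ hb.ne']

end Matrix

/-- Properties of the LARS equiangular vector: if the Gram matrix
`G = X_Aᵀ X_A` of the active variables is invertible, then `1ᵀG⁻¹1 > 0`, and
with `A_A = (1ᵀG⁻¹1)^{-1/2}`, `ω_A = A_A G⁻¹1`, `u_A = X_A ω_A`, the vector
`u_A` is a unit vector (`‖u_A‖₂ = 1`) making equal inner products `A_A` with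
all active variables (columns of `X_A`). -/
theorem lars_equiangular_vector {n m : ℕ} (hm : 1 ≤ m)
    (XA : Matrix (Fin n) (Fin m) ℝ)
    (G : Matrix (Fin m) (Fin m) ℝ) (hG : G = XAᵀ * XA)
    (hGinv : IsUnit G.det) :
    0 < (fun _ => (1 : ℝ)) ⬝ᵥ (G⁻¹ *ᵥ fun _ => (1 : ℝ)) ∧
    (Real.sqrt (∑ i, ((XA *ᵥ
        ((Real.sqrt ((fun _ => (1 : ℝ)) ⬝ᵥ (G⁻¹ *ᵥ fun _ => (1 : ℝ))))⁻¹ •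
          (G⁻¹ *ᵥ fun _ => (1 : ℝ)))) i) ^ 2) = 1) ∧
    (∀ j : Fin m,
      (∑ i, XA i j * (XA *ᵥ
          ((Real.sqrt ((fun _ => (1 : ℝ)) ⬝ᵥ (G⁻¹ *ᵥ fun _ => (1 : ℝ))))⁻¹ •
            (G⁻¹ *ᵥ fun _ => (1 : ℝ)))) i) =
        (Real.sqrt ((fun _ => (1 : ℝ)) ⬝ᵥ (G⁻¹ *ᵥ fun _ => (1 : ℝ))))⁻¹) := by
  subst hG
  have hone : (fun _ : Fin m => (1 : ℝ)) ≠ 0 := Function.ne_iff.2 ⟨⟨0, hm⟩, one_ne_zero⟩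
  have hpos : 0 < (fun _ => (1 : ℝ)) ⬝ᵥ ((XAᵀ * XA)⁻¹ *ᵥ fun _ => (1 : ℝ)) :=
    (posDef_transpose_mul_self_of_isUnit_det hGinv).inv.dotProduct_mulVec_pos hone
  refine ⟨hpos, ?_, fun j => ?_⟩
  · have hnorm := dotProduct_self_mulVec_equiangularWeights hGinv hpos
    refine (congrArg Real.sqrt ?_).trans Real.sqrt_one
    simpa only [dotProduct, sq, equiangularWeights] using hnorm
  · simpa [mulVec, dotProduct, equiangularWeights] using
      congrFun (transpose_mulVec_mulVec_equiangularWeights hGinv fun _ => 1) j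
end
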